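/- arXiv:2311.16186 — 3 statements merged into one kernel-verified Lean document; each statement's English description precedes it below -/
import Mathlib

section
/- Let s be a real number with s > 0 and s not an even positive integer, and let α, β be real numbers with |α| < π and |β| < π. Then ∫_0^∞ x^{s−1}·log((cos α + cosh x)/(cos β + cosh x)) dx = (2^s·π^{s+1}·csc(π·s/2)/s)·( ζ(−s, (π−α)/(2π)) + ζ(−s, (α+π)/(2π)) − ζ(−s, (π−β)/(2π)) − ζ(−s, (β+π)/(2π)) ), where ζ(s, a) denotes the Hurwitz zeta function. -/
/-!
For `x > 0`, `cos θ + cosh x = (eˣ / 2) |1 + e^{-x+iθ}|²`, so the Taylor series of `log (1 + z)`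
gives `log (cos θ + cosh x) = x - log 2 + 2 ∑ₙ (-1)ⁿ⁺¹ e^{-nx} cos (nθ) / n`. Integrating term by
term against `x^{s-1}` (each term contributes `Γ(s) n^{-s}`, and the series of absolute values
converges) turns the integral into `-2 Γ(s) ∑ₙ (-1)ⁿ (cos nα - cos nβ) / n^{s+1}`. Since
`(-1)ⁿ cos nθ = cos (2π n (θ + π) / (2π))`, this is a difference of two values of `cosZeta` at
`s + 1`, and the functional equation of the even Hurwitz zeta function rewrites them through
`ζ(-s, a) + ζ(-s, 1 - a)`.
-/

open Real MeasureTheory HurwitzZeta Set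

lemma hasSum_re_pow_div_log_norm_one_add {z : ℂ} (hz : ‖z‖ < 1) :
    HasSum (fun n : ℕ ↦ (-1) ^ (n + 1) * (z ^ n).re / n) (log ‖1 + z‖) := by
  rw [← Complex.log_re]
  refine (Complex.reCLM.hasSum (Complex.hasSum_taylorSeries_log hz)).congr_fun fun n ↦ ?_
  rw [Complex.reCLM_apply, show (-1 : ℂ) ^ (n + 1) * z ^ n / n
    = (((-1 : ℝ) ^ (n + 1) / n : ℝ) : ℂ) * z ^ n by push_cast; ring, Complex.re_ofReal_mul]
  ring

lemma cos_add_cosh_eq (θ x : ℝ) :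
    cos θ + cosh x = exp x / 2 * ‖1 + Complex.exp (-x + θ * Complex.I)‖ ^ 2 := by
  rw [Complex.sq_norm, Complex.normSq_apply]
  simp only [Complex.add_re, Complex.one_re, Complex.exp_re, Complex.neg_re, Complex.ofReal_re,
    Complex.mul_re, Complex.I_re, mul_zero, Complex.ofReal_im, Complex.I_im, mul_one, sub_self,
    add_zero, Complex.add_im, Complex.neg_im, neg_zero, Complex.mul_im, zero_add, Complex.one_im,
    Complex.exp_im]
  rw [cosh_eq, exp_neg]
  field_simp
  nlinarith [sin_sq_add_cos_sq θ]

lemma cos_add_cosh_pos (θ : ℝ) {x : ℝ} (hx : 0 < x) : 0 < cos θ + cosh x := by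
  linarith [neg_one_le_cos θ, one_lt_cosh.mpr hx.ne']

lemma hasSum_log_cos_add_cosh (θ : ℝ) {x : ℝ} (hx : 0 < x) :
    HasSum (fun n : ℕ ↦ 2 * (-1) ^ (n + 1) * cos (n * θ) / n * exp (-(n * x)))
      (log (cos θ + cosh x) - x + log 2) := by
  set z := Complex.exp (-x + θ * Complex.I)
  have hz : ‖z‖ < 1 := by
    simpa [z, Complex.norm_exp] using neg_lt_zero.mpr hx
  have hz_pow (n : ℕ) : (z ^ n).re = exp (-(n * x)) * cos (n * θ) := by
    rw [← Complex.exp_nat_mul, Complex.exp_re]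
    simp
  have hz_ne : ‖1 + z‖ ≠ 0 := by
    intro h
    have := cos_add_cosh_pos θ hx
    rw [cos_add_cosh_eq, h] at this
    simp at this
  have hlog : log (cos θ + cosh x) - x + log 2 = 2 * log ‖1 + z‖ := by
    rw [cos_add_cosh_eq, log_mul (by positivity) (by positivity),
      log_div (by positivity) two_ne_zero, log_exp, log_pow]
    push_cast
    ring
  rw [hlog]
  refine ((hasSum_re_pow_div_log_norm_one_add hz).mul_left 2).congr_fun fun n ↦ ?_
  rw [hz_pow]
  ring

noncomputable def logRatioCoeff (α β : ℝ) (n : ℕ) : ℝ :=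
  2 * (-1) ^ (n + 1) * (cos (n * α) - cos (n * β)) / n

lemma logRatioCoeff_zero (α β : ℝ) : logRatioCoeff α β 0 = 0 := by
  simp [logRatioCoeff]

lemma abs_logRatioCoeff_le (α β : ℝ) (n : ℕ) : |logRatioCoeff α β n| ≤ 4 / n := by
  have hcos : |cos (n * α) - cos (n * β)| ≤ 2 :=
    (abs_sub _ _).trans (by linarith [abs_cos_le_one (n * α), abs_cos_le_one (n * β)])
  simp only [logRatioCoeff, abs_div, abs_mul, abs_pow, abs_neg, abs_one, one_pow, abs_two,
    Nat.abs_cast]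
  gcongr
  linarith

lemma hasSum_logRatioCoeff_mul_exp (α β : ℝ) {x : ℝ} (hx : 0 < x) :
    HasSum (fun n : ℕ ↦ logRatioCoeff α β n * exp (-(n * x)))
      (log ((cos α + cosh x) / (cos β + cosh x))) := by
  rw [log_div (cos_add_cosh_pos α hx).ne' (cos_add_cosh_pos β hx).ne']
  have h := (hasSum_log_cos_add_cosh α hx).sub (hasSum_log_cos_add_cosh β hx)
  rw [show ∀ a b : ℝ, a - x + log 2 - (b - x + log 2) = a - b by intros; ring] at h
  exact h.congr_fun fun n ↦ by rw [logRatioCoeff]; ring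

lemma Gamma_mul_logRatioCoeff_div_rpow {s : ℝ} (hs : 0 < s) (α β : ℝ) (n : ℕ) :
    Gamma s * (logRatioCoeff α β n / (n : ℝ) ^ s) = -2 * Gamma s *
      ((-1) ^ n * cos (n * α) / (n : ℝ) ^ (s + 1) - (-1) ^ n * cos (n * β) / (n : ℝ) ^ (s + 1)) := by
  rcases Nat.eq_zero_or_pos n with rfl | hn
  · simp [logRatioCoeff, zero_rpow (by linarith : s + 1 ≠ 0)]
  rw [rpow_add_one (by positivity), logRatioCoeff]
  field_simp
  ring

lemma integrableOn_mul_rpow_mul_exp_neg_natCast_mul {s : ℝ} (hs : 0 < s) {c : ℕ → ℝ}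
    (hc0 : c 0 = 0) (n : ℕ) :
    IntegrableOn (fun x ↦ c n * (x ^ (s - 1) * exp (-(n * x)))) (Ioi 0) := by
  rcases Nat.eq_zero_or_pos n with rfl | hn
  · simp [hc0]
  have h := integrableOn_rpow_mul_exp_neg_mul_rpow (s := s - 1) (by linarith) one_pos
    (Nat.cast_pos.mpr hn)
  simp only [rpow_one, neg_mul] at h
  exact h.const_mul _

lemma integral_mul_rpow_mul_exp_neg_natCast_mul {s : ℝ} (hs : 0 < s) {c : ℕ → ℝ}
    (hc0 : c 0 = 0) (n : ℕ) :
    ∫ x in Ioi 0, c n * (x ^ (s - 1) * exp (-(n * x))) = Gamma s * (c n / (n : ℝ) ^ s) := by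
  rcases Nat.eq_zero_or_pos n with rfl | hn
  · simp [hc0]
  have hn' : (0 : ℝ) < n := Nat.cast_pos.mpr hn
  rw [integral_const_mul, integral_rpow_mul_exp_neg_mul_Ioi hs hn', div_rpow zero_le_one hn'.le,
    one_rpow]
  ring

lemma hasSum_integral_rpow_mul_tsum_exp {s : ℝ} (hs : 0 < s) {c : ℕ → ℝ} (hc0 : c 0 = 0)
    (hc : Summable fun n : ℕ ↦ |c n| / (n : ℝ) ^ s) :
    HasSum (fun n : ℕ ↦ Gamma s * (c n / (n : ℝ) ^ s))
      (∫ x in Ioi 0, x ^ (s - 1) * ∑' n : ℕ, c n * exp (-(n * x))) := by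
  have hnorm (n : ℕ) : ∫ x in Ioi 0, ‖c n * (x ^ (s - 1) * exp (-(n * x)))‖
      = Gamma s * (|c n| / (n : ℝ) ^ s) := by
    rw [← integral_mul_rpow_mul_exp_neg_natCast_mul hs (c := fun n ↦ |c n|) (by simp [hc0]) n]
    refine setIntegral_congr_fun measurableSet_Ioi fun x hx ↦ ?_
    rw [norm_mul, norm_mul, norm_of_nonneg (rpow_nonneg (le_of_lt hx) _),
      norm_of_nonneg (exp_pos _).le, norm_eq_abs]
  have hsum (x : ℝ) : x ^ (s - 1) * ∑' n : ℕ, c n * exp (-(n * x))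
      = ∑' n : ℕ, c n * (x ^ (s - 1) * exp (-(n * x))) := by
    rw [← tsum_mul_left]
    exact tsum_congr fun n ↦ by ring
  simp only [hsum]
  exact (hasSum_integral_of_summable_integral_norm
    (integrableOn_mul_rpow_mul_exp_neg_natCast_mul hs hc0)
    ((hc.mul_left (Gamma s)).congr fun n ↦ (hnorm n).symm)).congr_fun
    fun n ↦ (integral_mul_rpow_mul_exp_neg_natCast_mul hs hc0 n).symm

lemma summable_abs_div_rpow_of_abs_le {s C : ℝ} (hs : 0 < s) {c : ℕ → ℝ}
    (hc : ∀ n : ℕ, |c n| ≤ C / n) : Summable fun n : ℕ ↦ |c n| / (n : ℝ) ^ s := by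
  refine Summable.of_nonneg_of_le (fun n ↦ by positivity) (fun n ↦ ?_)
    ((summable_nat_rpow_inv.mpr (by linarith : 1 < s + 1)).mul_left C)
  rcases Nat.eq_zero_or_pos n with rfl | hn
  · simp [zero_rpow hs.ne', zero_rpow (by linarith : s + 1 ≠ 0)]
  have hn' : (0 : ℝ) < n := Nat.cast_pos.mpr hn
  calc |c n| / (n : ℝ) ^ s ≤ C / n / (n : ℝ) ^ s := by gcongr; exact hc n
    _ = C * ((n : ℝ) ^ (s + 1))⁻¹ := by rw [rpow_add_one hn'.ne']; field_simp

lemma hasSum_neg_one_pow_mul_cos_div_rpow (θ : ℝ) {u : ℝ} (hu : 1 < u) :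
    HasSum (fun n : ℕ ↦ (((-1) ^ n * cos (n * θ) / (n : ℝ) ^ u : ℝ) : ℂ))
      (cosZeta ((θ + π) / (2 * π) : ℝ) u) := by
  refine (hasSum_nat_cosZeta _ (by simpa using hu)).congr_fun fun n ↦ ?_
  rw [show 2 * π * ((θ + π) / (2 * π)) * n = n * π - -(n * θ) by field_simp; ring,
    cos_nat_mul_pi_sub, cos_neg, Complex.ofReal_div, Complex.ofReal_cpow n.cast_nonneg]
  norm_cast

lemma sin_pi_mul_div_two_ne_zero {s : ℝ} (hs : 0 < s) (hs' : ∀ n : ℕ, 0 < n → s ≠ 2 * n) :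
    sin (π * s / 2) ≠ 0 := by
  intro h
  obtain ⟨k, hk⟩ := sin_eq_zero_iff.mp h
  have hsk : s = 2 * k := by
    have := pi_pos
    field_simp at hk
    linarith
  have hk0 : 0 < k := by exact_mod_cast (show (0 : ℝ) < k by linarith)
  obtain ⟨m, rfl⟩ := Int.eq_ofNat_of_zero_le hk0.le
  exact hs' m (by omega) (by exact_mod_cast hsk)

lemma mul_hurwitzZetaEven_neg (a : UnitAddCircle) {s : ℝ} (hs : 0 < s)
    (hsin : sin (π * s / 2) ≠ 0) :
    ((2 ^ s * π ^ (s + 1) * (1 / sin (π * s / 2)) / s : ℝ) : ℂ) * hurwitzZetaEven a (-s)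
      = -Complex.Gamma s * cosZeta a (s + 1) := by
  have hfe := hurwitzZetaEven_one_sub a (s := s + 1)
    (fun n h ↦ by
      have := congrArg Complex.re h
      simp only [Complex.add_re, Complex.ofReal_re, Complex.one_re, Complex.neg_re,
        Complex.natCast_re] at this
      linarith [n.cast_nonneg (α := ℝ)])
    (Or.inr fun h ↦ by
      have := congrArg Complex.re h
      simp only [Complex.add_re, Complex.ofReal_re, Complex.one_re, add_eq_right] at this
      linarith)
  rw [show 1 - ((s : ℂ) + 1) = -s by ring] at hfe
  set S := sin (π * s / 2) with hS
  have hcos : Complex.cos (π * (s + 1) / 2) = -(S : ℂ) := by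
    rw [show (π : ℂ) * (s + 1) / 2 = π * s / 2 + π / 2 by ring, Complex.cos_add_pi_div_two, hS]
    push_cast
    rfl
  have hpow : (2 * π : ℂ) ^ (-((s : ℂ) + 1)) = (((2 * π) ^ (s + 1) : ℝ) : ℂ)⁻¹ := by
    rw [Complex.cpow_neg, Complex.ofReal_cpow (by positivity)]
    push_cast
    rfl
  have hconst : ((2 ^ s * π ^ (s + 1) * (1 / S) / s : ℝ) : ℂ) *
      (2 * (((2 * π) ^ (s + 1) : ℝ) : ℂ)⁻¹ * s * S) = 1 := by
    have : (2 ^ s * π ^ (s + 1) * (1 / S) / s) * (2 * ((2 * π) ^ (s + 1))⁻¹ * s * S) = 1 := by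
      rw [mul_rpow zero_le_two pi_pos.le, rpow_add_one two_ne_zero]
      field_simp
    exact_mod_cast this
  rw [hfe, Complex.Gamma_add_one _ (by exact_mod_cast hs.ne'), hcos, hpow]
  linear_combination (-Complex.Gamma s * cosZeta a (s + 1)) * hconst

lemma coe_pi_sub_div_two_pi (θ : ℝ) :
    (((π - θ) / (2 * π) : ℝ) : UnitAddCircle) = -(((θ + π) / (2 * π) : ℝ) : UnitAddCircle) := by
  rw [show (π - θ) / (2 * π) = 1 - (θ + π) / (2 * π) by field_simp; ring, AddCircle.coe_sub,
    AddCircle.coe_period, zero_sub]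

lemma hurwitzZeta_neg_add_hurwitzZeta (a : UnitAddCircle) (s : ℂ) :
    hurwitzZeta (-a) s + hurwitzZeta a s = 2 * hurwitzZetaEven a s := by
  rw [hurwitzZetaEven_eq]
  ring

theorem stmt_11_general (s α β : ℝ) (hs : 0 < s) (hs' : ∀ n : ℕ, 0 < n → s ≠ 2 * n) :
    ((∫ x in Set.Ioi (0 : ℝ),
        x ^ (s - 1) * Real.log ((Real.cos α + Real.cosh x) / (Real.cos β + Real.cosh x)) : ℝ)
      : ℂ) =
      (((2 : ℝ) ^ s * π ^ (s + 1) * (1 / Real.sin (π * s / 2)) / s : ℝ) : ℂ) *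
        (hurwitzZeta (((π - α) / (2 * π) : ℝ) : UnitAddCircle) (-(s : ℂ)) +
         hurwitzZeta (((α + π) / (2 * π) : ℝ) : UnitAddCircle) (-(s : ℂ)) -
         hurwitzZeta (((π - β) / (2 * π) : ℝ) : UnitAddCircle) (-(s : ℂ)) -
         hurwitzZeta (((β + π) / (2 * π) : ℝ) : UnitAddCircle) (-(s : ℂ))) := by
  have hlhs := hasSum_integral_rpow_mul_tsum_exp hs (logRatioCoeff_zero α β)
    (summable_abs_div_rpow_of_abs_le hs (abs_logRatioCoeff_le α β))
  rw [setIntegral_congr_fun measurableSet_Ioi fun x hx ↦ by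
    rw [(hasSum_logRatioCoeff_mul_exp α β hx).tsum_eq]] at hlhs
  have hrhs := ((hasSum_neg_one_pow_mul_cos_div_rpow α (lt_add_of_pos_left 1 hs)).sub
    (hasSum_neg_one_pow_mul_cos_div_rpow β (lt_add_of_pos_left 1 hs))).mul_left
    (-2 * Complex.Gamma s)
  rw [Complex.ofReal_add, Complex.ofReal_one] at hrhs
  rw [(Complex.hasSum_ofReal.mpr hlhs).unique (hrhs.congr_fun fun n ↦ by
    rw [Complex.Gamma_ofReal]
    exact_mod_cast Gamma_mul_logRatioCoeff_div_rpow hs α β n)]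
  have hsin := sin_pi_mul_div_two_ne_zero hs hs'
  rw [coe_pi_sub_div_two_pi, coe_pi_sub_div_two_pi, sub_sub, hurwitzZeta_neg_add_hurwitzZeta,
    hurwitzZeta_neg_add_hurwitzZeta]
  linear_combination (-2) * mul_hurwitzZetaEven_neg ((α + π) / (2 * π) : ℝ) hs hsin
    + 2 * mul_hurwitzZetaEven_neg ((β + π) / (2 * π) : ℝ) hs hsin

theorem stmt_11 (s α β : ℝ) (hs : 0 < s) (hs' : ∀ n : ℕ, 0 < n → s ≠ 2 * n)
    (hα : |α| < π) (hβ : |β| < π) :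
    ((∫ x in Set.Ioi (0 : ℝ),
        x ^ (s - 1) * Real.log ((Real.cos α + Real.cosh x) / (Real.cos β + Real.cosh x)) : ℝ)
      : ℂ) =
      (((2 : ℝ) ^ s * π ^ (s + 1) * (1 / Real.sin (π * s / 2)) / s : ℝ) : ℂ) *
        (hurwitzZeta (((π - α) / (2 * π) : ℝ) : UnitAddCircle) (-(s : ℂ)) +
         hurwitzZeta (((α + π) / (2 * π) : ℝ) : UnitAddCircle) (-(s : ℂ)) -
         hurwitzZeta (((π - β) / (2 * π) : ℝ) : UnitAddCircle) (-(s : ℂ)) -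
         hurwitzZeta (((β + π) / (2 * π) : ℝ) : UnitAddCircle) (-(s : ℂ))) :=
  stmt_11_general s α β hs hs'
end

section
/- Let α > 0 and m be real numbers. Then ∑_{n=−∞}^{∞} e^{−n·α}·sech²(m + n·α) = (π·e^{m}/α²)·∑_{n=−∞}^{∞} sech(π²·n/α)·( α·cos(2·π·m·n/α) − 2·π·n·sin(2·π·m·n/α) ), where both doubly infinite series converge absolutely. -/
open Real

/-- The real hyperbolic secant. -/
noncomputable def sech (x : ℝ) : ℝ := 1 / Real.cosh x

/-!
Poisson summation applied to `f x = exp (-x α) sech² (m + x α)`. Since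
`sech² u = 4 σ(2u) (1 - σ(2u))` for the logistic function `σ`, the substitution `w = σ u`
turns the Fourier transform of `f` at `ξ` into `(2 / α) e^{2 z m} B(1 - z, 1 + z)` with
`z = 1/2 + iπξ/α`, and the reflection formula gives `B(1 - z, 1 + z) = π z / sin (π z)`, where
`sin (π z) = cosh (π² ξ / α)`. The right-hand side of the identity is the real part of the
Fourier side of Poisson's formula; both sides decay exponentially, hence converge absolutely.
-/

open MeasureTheory Filter Asymptotics Set
open scoped FourierTransform

lemma sech_nonneg (x : ℝ) : 0 ≤ sech x := by
  unfold sech; positivity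

lemma sech_le_two_mul_exp_neg_abs (x : ℝ) : sech x ≤ 2 * Real.exp (-|x|) := by
  rw [sech, ← cosh_abs, cosh_eq, Real.exp_neg]
  have := Real.exp_pos |x|
  rw [div_le_iff₀ (by positivity)]
  field_simp
  nlinarith [Real.exp_pos (-|x|)]

lemma sech_sq_eq_sigmoid (x : ℝ) :
    sech x ^ 2 = 4 * (sigmoid (2 * x) * (1 - sigmoid (2 * x))) := by
  rw [← sigmoid_neg, ← sigmoid_mul_rexp_neg, sigmoid_def, sech, cosh_eq, Real.exp_neg,
    Real.exp_neg, show 2 * x = x + x by ring, Real.exp_add]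
  field_simp
  ring

lemma exp_neg_mul_sech_sq_le (t : ℝ) : Real.exp (-t) * sech t ^ 2 ≤ 4 * Real.exp (-|t|) := by
  have h := sech_le_two_mul_exp_neg_abs t
  calc Real.exp (-t) * sech t ^ 2 ≤ Real.exp |t| * (2 * Real.exp (-|t|)) ^ 2 := by
        gcongr
        · exact neg_le_abs t
        · exact sech_nonneg t
    _ = 4 * Real.exp (-|t|) * (Real.exp |t| * Real.exp (-|t|)) := by ring
    _ = 4 * Real.exp (-|t|) := by rw [← Real.exp_add, add_neg_cancel, Real.exp_zero, mul_one]

lemma exp_neg_mul_sech_sq_add_le {α : ℝ} (hα : 0 < α) (m x : ℝ) :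
    Real.exp (-x * α) * sech (m + x * α) ^ 2 ≤ 4 * Real.exp (m + |m|) * Real.exp (-α * |x|) := by
  have htri : α * |x| ≤ |m + x * α| + |m| := by
    simpa [abs_mul, abs_of_pos hα, mul_comm] using abs_sub (m + x * α) m
  calc Real.exp (-x * α) * sech (m + x * α) ^ 2
      = Real.exp m * (Real.exp (-(m + x * α)) * sech (m + x * α) ^ 2) := by
        rw [← mul_assoc, ← Real.exp_add]; ring_nf
    _ ≤ Real.exp m * (4 * Real.exp (-|m + x * α|)) :=
        mul_le_mul_of_nonneg_left (exp_neg_mul_sech_sq_le _) (Real.exp_pos m).le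
    _ ≤ Real.exp m * (4 * Real.exp (|m| + -α * |x|)) := by gcongr; linarith
    _ = 4 * Real.exp (m + |m|) * Real.exp (-α * |x|) := by simp only [Real.exp_add]; ring

lemma exp_neg_mul_abs_isLittleO_abs_rpow_cocompact {a : ℝ} (ha : 0 < a) (b : ℝ) :
    (fun x : ℝ => Real.exp (-a * |x|)) =o[cocompact ℝ] (|·| ^ b) := by
  rw [cocompact_eq_atBot_atTop, ← comap_abs_atTop]
  exact (isLittleO_exp_neg_mul_rpow_atTop ha b).comp_tendsto tendsto_comap

lemma exp_neg_mul_sech_sq_isLittleO_abs_rpow_cocompact {α : ℝ} (hα : 0 < α) (m b : ℝ) :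
    (fun x : ℝ => Real.exp (-x * α) * sech (m + x * α) ^ 2) =o[cocompact ℝ] (|·| ^ b) := by
  refine IsBigO.trans_isLittleO ?_ (exp_neg_mul_abs_isLittleO_abs_rpow_cocompact hα b)
  refine IsBigO.of_bound (4 * Real.exp (m + |m|)) (Eventually.of_forall fun x => ?_)
  rw [Real.norm_of_nonneg (by positivity), Real.norm_of_nonneg (by positivity)]
  exact exp_neg_mul_sech_sq_add_le hα m x

lemma summable_int_abs_pow_mul_sech (k : ℕ) {c : ℝ} (hc : 0 < c) :
    Summable fun n : ℤ => |(n : ℝ)| ^ k * sech (c * n) := by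
  have hexp : Summable fun n : ℤ => |(n : ℝ)| ^ k * Real.exp (-c * |(n : ℝ)|) :=
    Summable.of_nat_of_neg (by simpa using summable_pow_mul_exp_neg_nat_mul k hc)
      (by simpa using summable_pow_mul_exp_neg_nat_mul k hc)
  refine (hexp.mul_left 2).of_nonneg_of_le (fun n => by positivity [sech_nonneg (c * n)]) fun n => ?_
  have h := sech_le_two_mul_exp_neg_abs (c * n)
  rw [abs_mul, abs_of_pos hc] at h
  calc |(n : ℝ)| ^ k * sech (c * n) ≤ |(n : ℝ)| ^ k * (2 * Real.exp (-(c * |(n : ℝ)|))) := by gcongr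
    _ = 2 * (|(n : ℝ)| ^ k * Real.exp (-c * |(n : ℝ)|)) := by ring_nf

lemma ofReal_cpow_eq_exp_log_mul {a : ℝ} (ha : 0 < a) (w : ℂ) :
    (a : ℂ) ^ w = Complex.exp (Real.log a * w) := by
  rw [Complex.cpow_def_of_ne_zero (by exact_mod_cast ha.ne'), Complex.ofReal_log ha.le]

lemma sigmoid_cpow_neg_mul_one_sub_sigmoid_cpow (u : ℝ) (z : ℂ) :
    (sigmoid u : ℂ) ^ (-z) * ((1 - sigmoid u : ℝ) : ℂ) ^ z = Complex.exp (-z * u) := by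
  have h1 : 0 < 1 - sigmoid u := sub_pos.2 (sigmoid_lt_one u)
  have hlog : Real.log (1 - sigmoid u) = Real.log (sigmoid u) - u := by
    rw [← sigmoid_neg, ← sigmoid_mul_rexp_neg, Real.log_mul (sigmoid_pos u).ne' (Real.exp_pos _).ne',
      Real.log_exp, sub_eq_add_neg]
  rw [ofReal_cpow_eq_exp_log_mul (sigmoid_pos u), ofReal_cpow_eq_exp_log_mul h1, ← Complex.exp_add,
    hlog]
  push_cast
  ring_nf

lemma integral_cexp_mul_sigmoid_mul_one_sub (z : ℂ) :
    ∫ u : ℝ, Complex.exp (-z * u) * (sigmoid u * (1 - sigmoid u) : ℝ) =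
      Complex.betaIntegral (1 - z) (1 + z) := by
  have h := integral_image_eq_integral_abs_deriv_smul MeasurableSet.univ
    (fun u _ => (hasDerivAt_sigmoid u).hasDerivWithinAt) sigmoid_injective.injOn
    (fun w : ℝ => (w : ℂ) ^ (1 - z - 1) * (1 - (w : ℂ)) ^ (1 + z - 1))
  rw [image_univ, range_sigmoid, setIntegral_univ] at h
  rw [Complex.betaIntegral, intervalIntegral.integral_of_le zero_le_one,
    integral_Ioc_eq_integral_Ioo, h]
  refine integral_congr_ae (Eventually.of_forall fun u => ?_)
  have h1 : 0 < 1 - sigmoid u := sub_pos.2 (sigmoid_lt_one u)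
  simp only [abs_of_pos (mul_pos (sigmoid_pos u) h1), sub_sub_cancel_left, add_sub_cancel_left,
    Complex.real_smul]
  rw [← sigmoid_cpow_neg_mul_one_sub_sigmoid_cpow u z]
  push_cast
  ring

lemma Complex.betaIntegral_one_sub_one_add {z : ℂ} (hz₀ : z ≠ 0) (hz : |z.re| < 1) :
    betaIntegral (1 - z) (1 + z) = π * z / sin (π * z) := by
  have h := Gamma_mul_Gamma_eq_betaIntegral (s := 1 - z) (t := 1 + z)
    (by simp; linarith [le_abs_self z.re]) (by simp; linarith [neg_abs_le z.re])
  have hΓ : Gamma (1 + z) = z * Gamma z := by rw [add_comm, Gamma_add_one z hz₀]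
  rw [show 1 - z + (1 + z) = 2 by ring, show Gamma 2 = 1 by simp, one_mul, hΓ] at h
  rw [← h, mul_left_comm, mul_comm (Gamma (1 - z)), Gamma_mul_Gamma_one_sub]
  ring

lemma fourier_exp_neg_mul_sech_sq_eq_betaIntegral {α : ℝ} (hα : 0 < α) (m ξ : ℝ) (z : ℂ)
    (hz : z = 1 / 2 + π * ξ / α * Complex.I) :
    𝓕 (fun x : ℝ => ((Real.exp (-x * α) * sech (m + x * α) ^ 2 : ℝ) : ℂ)) ξ =
      2 * Complex.exp (2 * z * m) / α * Complex.betaIntegral (1 - z) (1 + z) := by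
  set G : ℝ → ℂ := fun u => Complex.exp (-z * u) * (sigmoid u * (1 - sigmoid u) : ℝ)
  have hα' : (α : ℂ) ≠ 0 := by exact_mod_cast hα.ne'
  have hpt (x : ℝ) : Complex.exp (↑(-2 * π * x * ξ) * Complex.I) •
      ((Real.exp (-x * α) * sech (m + x * α) ^ 2 : ℝ) : ℂ) =
      4 * Complex.exp (2 * z * m) * G (2 * α * x + 2 * m) := by
    have hexp : Complex.exp (↑(-2 * π * x * ξ) * Complex.I) * Complex.exp ↑(-x * α) =
        Complex.exp (2 * z * m) * Complex.exp (-z * ↑(2 * α * x + 2 * m)) := by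
      rw [← Complex.exp_add, ← Complex.exp_add, hz]
      congr 1
      push_cast
      field_simp
      ring
    rw [sech_sq_eq_sigmoid, show 2 * (m + x * α) = 2 * α * x + 2 * m by ring, smul_eq_mul,
      Complex.ofReal_mul (Real.exp _), Complex.ofReal_exp, ← mul_assoc, hexp]
    simp only [G]
    push_cast
    ring
  have hscale : ∫ x : ℝ, G (2 * α * x + 2 * m) = (2 * α : ℝ)⁻¹ * ∫ u : ℝ, G u := by
    rw [Measure.integral_comp_mul_left (fun y => G (y + 2 * m)), integral_add_right_eq_self,
      abs_of_pos (by positivity), Complex.real_smul]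
  rw [Real.fourier_real_eq_integral_exp_smul, integral_congr_ae (Eventually.of_forall hpt),
    integral_const_mul, hscale, integral_cexp_mul_sigmoid_mul_one_sub]
  push_cast
  field_simp
  ring

lemma fourier_exp_neg_mul_sech_sq {α : ℝ} (hα : 0 < α) (m ξ : ℝ) :
    𝓕 (fun x : ℝ => ((Real.exp (-x * α) * sech (m + x * α) ^ 2 : ℝ) : ℂ)) ξ =
      (π * Real.exp m / (α ^ 2 * Real.cosh (π ^ 2 * ξ / α)) : ℝ) *
        (Complex.exp (↑(2 * π * m * ξ / α) * Complex.I) * (α + 2 * π * ξ * Complex.I)) := by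
  set z : ℂ := 1 / 2 + π * ξ / α * Complex.I with hz
  have hα' : (α : ℂ) ≠ 0 := by exact_mod_cast hα.ne'
  have hz₀ : z ≠ 0 := fun h => by simpa [hz] using congrArg Complex.re h
  have hzre : |z.re| < 1 := by
    rw [hz]; simp; norm_num [abs_of_pos]
  have hsin : Complex.sin (π * z) = Real.cosh (π ^ 2 * ξ / α) := by
    rw [show (π : ℂ) * z = (π ^ 2 * ξ / α : ℝ) * Complex.I + π / 2 by rw [hz]; push_cast; ring,
      Complex.sin_add_pi_div_two, Complex.cos_mul_I, Complex.ofReal_cosh]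
  have hexp : Complex.exp (2 * z * m) =
      Real.exp m * Complex.exp (↑(2 * π * m * ξ / α) * Complex.I) := by
    rw [Complex.ofReal_exp, ← Complex.exp_add, hz]
    congr 1
    push_cast
    field_simp
  rw [fourier_exp_neg_mul_sech_sq_eq_betaIntegral hα m ξ z hz,
    Complex.betaIntegral_one_sub_one_add hz₀ hzre, hsin, hexp, hz]
  push_cast
  field_simp

lemma re_fourier_exp_neg_mul_sech_sq {α : ℝ} (hα : 0 < α) (m ξ : ℝ) :
    (𝓕 (fun x : ℝ => ((Real.exp (-x * α) * sech (m + x * α) ^ 2 : ℝ) : ℂ)) ξ).re =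
      π * Real.exp m / α ^ 2 * (sech (π ^ 2 * ξ / α) *
        (α * Real.cos (2 * π * m * ξ / α) - 2 * π * ξ * Real.sin (2 * π * m * ξ / α))) := by
  rw [fourier_exp_neg_mul_sech_sq hα, Complex.re_ofReal_mul, Complex.exp_mul_I,
    ← Complex.ofReal_cos, ← Complex.ofReal_sin]
  simp only [Complex.mul_re, Complex.add_re, Complex.add_im, Complex.ofReal_re, Complex.ofReal_im,
    Complex.mul_im, Complex.I_re, Complex.I_im, Complex.re_ofNat, Complex.im_ofNat]
  rw [sech]
  field_simp
  ring

lemma norm_fourier_exp_neg_mul_sech_sq_le {α : ℝ} (hα : 0 < α) (m ξ : ℝ) :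
    ‖𝓕 (fun x : ℝ => ((Real.exp (-x * α) * sech (m + x * α) ^ 2 : ℝ) : ℂ)) ξ‖ ≤
      π * Real.exp m / α ^ 2 * ((α + 2 * π * |ξ|) * sech (π ^ 2 / α * ξ)) := by
  have hnorm : ‖(α : ℂ) + 2 * π * ξ * Complex.I‖ ≤ α + 2 * π * |ξ| := by
    refine (norm_add_le _ _).trans_eq ?_
    simp [abs_of_pos hα, abs_of_pos pi_pos]
  rw [fourier_exp_neg_mul_sech_sq hα, norm_mul, norm_mul, Complex.norm_exp_ofReal_mul_I, one_mul,
    Complex.norm_real, Real.norm_of_nonneg (by positivity), sech,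
    show π ^ 2 / α * ξ = π ^ 2 * ξ / α by ring]
  calc _ = π * Real.exp m / α ^ 2 * (‖(α : ℂ) + 2 * π * ξ * Complex.I‖ *
        (1 / Real.cosh (π ^ 2 * ξ / α))) := by ring
    _ ≤ _ := by gcongr

lemma summable_fourier_exp_neg_mul_sech_sq {α : ℝ} (hα : 0 < α) (m : ℝ) :
    Summable fun n : ℤ =>
      𝓕 (fun x : ℝ => ((Real.exp (-x * α) * sech (m + x * α) ^ 2 : ℝ) : ℂ)) n := by
  have hc : 0 < π ^ 2 / α := by positivity
  have h := ((summable_int_abs_pow_mul_sech 0 hc).mul_left α).add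
    ((summable_int_abs_pow_mul_sech 1 hc).mul_left (2 * π)) |>.mul_left (π * Real.exp m / α ^ 2)
  refine .of_norm_bounded (h.congr fun n => ?_) fun n => norm_fourier_exp_neg_mul_sech_sq_le hα m n
  ring

theorem stmt_13 (α m : ℝ) (hα : 0 < α) :
    Summable (fun n : ℤ => Real.exp (-(n : ℝ) * α) * sech (m + (n : ℝ) * α) ^ 2) ∧
    Summable (fun n : ℤ => sech (π ^ 2 * (n : ℝ) / α) *
      (α * Real.cos (2 * π * m * (n : ℝ) / α) - 2 * π * (n : ℝ) * Real.sin (2 * π * m * (n : ℝ) / α))) ∧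
    ∑' n : ℤ, Real.exp (-(n : ℝ) * α) * sech (m + (n : ℝ) * α) ^ 2 =
      (π * Real.exp m / α ^ 2) *
        ∑' n : ℤ, sech (π ^ 2 * (n : ℝ) / α) *
          (α * Real.cos (2 * π * m * (n : ℝ) / α) -
           2 * π * (n : ℝ) * Real.sin (2 * π * m * (n : ℝ) / α)) := by
  set f : ℝ → ℂ := fun x => ((Real.exp (-x * α) * sech (m + x * α) ^ 2 : ℝ) : ℂ)
  have hdecay := (exp_neg_mul_sech_sq_isLittleO_abs_rpow_cocompact hα m (-2)).isBigO
  have hF := summable_fourier_exp_neg_mul_sech_sq hα m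
  have hre (n : ℤ) := re_fourier_exp_neg_mul_sech_sq hα m n
  refine ⟨summable_of_isBigO (Real.summable_abs_int_rpow one_lt_two)
      (hdecay.comp_tendsto Int.tendsto_coe_cofinite),
    (summable_mul_left_iff (by positivity)).1 ((Complex.reCLM.summable hF).congr hre), ?_⟩
  have hcont : Continuous f := by
    unfold f sech
    fun_prop (disch := exact fun x => (Real.cosh_pos _).ne')
  have hP := Real.tsum_eq_tsum_fourier_of_rpow_decay_of_summable hcont one_lt_two
    (Complex.isBigO_ofReal_left.2 hdecay) hF 0
  simp only [zero_add, QuotientAddGroup.mk_zero, fourier_eval_zero, mul_one] at hP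
  have := congrArg Complex.re hP
  rw [Complex.re_tsum hF, ← Complex.ofReal_tsum, Complex.ofReal_re] at this
  rw [this, ← tsum_mul_left]
  exact tsum_congr hre
end

section
/- Let z be a complex number that is not an integer, and suppose ζ(z) ≠ 0 and ζ(1−z) ≠ 0, where ζ is the Riemann zeta function. Then the digamma function satisfies ψ(z+1) = −ζ′(1−z)/ζ(1−z) − ζ′(z)/ζ(z) + 1/z + (π/2)·tan(π·z/2) + log(2π), where ψ(w) = Γ′(w)/Γ(w) is the logarithmic derivative of the complex Gamma function and ζ′ denotes the complex derivative of ζ. -/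
/-!
Take the logarithmic derivative at `s = z` of the functional equation
`ζ(1 - s) = 2 (2π)^(-s) Γ(s) cos(πs/2) ζ(s)`, which holds on a neighbourhood of `z` since
`z` is not an integer, and combine it with the recurrence `ψ(z + 1) = ψ(z) + 1/z`.
-/

open Complex Real Filter Topology

lemma logDeriv_comp_const_sub {𝕜 𝕜' : Type*} [NontriviallyNormedField 𝕜]
    [NontriviallyNormedField 𝕜'] [NormedAlgebra 𝕜 𝕜'] (f : 𝕜 → 𝕜') (a x : 𝕜) :
    logDeriv (fun x => f (a - x)) x = -logDeriv f (a - x) := by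
  simp only [logDeriv_apply, deriv_comp_const_sub, neg_div]

namespace Complex

lemma integerComplement.ne_neg_natCast {z : ℂ} (hz : z ∈ integerComplement) (n : ℕ) :
    z ≠ -n :=
  fun h => hz ⟨-n, by simp [h]⟩

lemma logDeriv_const_cpow_neg {a : ℂ} (ha : a ≠ 0) (s : ℂ) :
    logDeriv (fun s : ℂ => a ^ (-s)) s = -log a := by
  rw [logDeriv_apply, ((hasDerivAt_neg s).const_cpow (.inl ha)).deriv]
  have : a ^ (-s) ≠ 0 := by simp [cpow_eq_zero_iff, ha]
  field_simp

lemma logDeriv_cos_pi_mul_div_two (s : ℂ) :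
    logDeriv (fun s : ℂ => cos (π * s / 2)) s = -(π / 2 * tan (π * s / 2)) := by
  have : (fun s : ℂ => cos (π * s / 2)) = cos ∘ fun s => π / 2 * s := by
    ext s; simp only [Function.comp_apply]; ring_nf
  rw [this, logDeriv_comp differentiableAt_cos (by fun_prop), logDeriv_cos, deriv_const_mul_field']
  simp only [Pi.neg_apply, deriv_id'']
  ring_nf

lemma cos_pi_mul_div_two_ne_zero {z : ℂ} (hz : z ∈ integerComplement) :
    cos (π * z / 2) ≠ 0 := by
  rw [cos_ne_zero_iff]
  intro k hk
  refine hz ⟨2 * k + 1, ?_⟩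
  have hpi : (π : ℂ) ≠ 0 := ofReal_ne_zero.2 pi_ne_zero
  apply mul_left_cancel₀ hpi
  push_cast
  linear_combination -2 * hk

lemma eventuallyEq_riemannZeta_one_sub {z : ℂ} (hz : z ∈ integerComplement) :
    (fun s => riemannZeta (1 - s)) =ᶠ[𝓝 z]
      fun s => 2 * (2 * π) ^ (-s) * Gamma s * cos (π * s / 2) * riemannZeta s := by
  filter_upwards [isOpen_compl_range_intCast.mem_nhds hz] with s hs
  exact riemannZeta_one_sub (integerComplement.ne_neg_natCast hs) (integerComplement.ne_one hs)

theorem logDeriv_riemannZeta_one_sub {z : ℂ} (hz : z ∈ integerComplement)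
    (hζ : riemannZeta z ≠ 0) :
    logDeriv riemannZeta (1 - z) =
      Real.log (2 * π) - digamma z + π / 2 * tan (π * z / 2) - logDeriv riemannZeta z := by
  have hnat := integerComplement.ne_neg_natCast hz
  have h2π : (2 * π : ℂ) ≠ 0 := by simp [pi_ne_zero]
  have hpow : (2 * π : ℂ) ^ (-z) ≠ 0 := by simp [cpow_eq_zero_iff, h2π]
  have hΓ : Gamma z ≠ 0 := Gamma_ne_zero hnat
  have hcos := cos_pi_mul_div_two_ne_zero hz
  have hΓd : DifferentiableAt ℂ Gamma z := differentiableAt_Gamma z hnat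
  have hζd : DifferentiableAt ℂ riemannZeta z :=
    differentiableAt_riemannZeta (integerComplement.ne_one hz)
  have hpowd : DifferentiableAt ℂ (fun s : ℂ => (2 * π : ℂ) ^ (-s)) z :=
    differentiableAt_id.neg.const_cpow (.inl h2π)
  have hcosd : DifferentiableAt ℂ (fun s : ℂ => cos (π * s / 2)) z := by fun_prop
  rw [← neg_neg (logDeriv riemannZeta (1 - z)), ← logDeriv_comp_const_sub,
    (logDeriv_congr_nhds (eventuallyEq_riemannZeta_one_sub hz)).eq_of_nhds,
    logDeriv_mul _ (by simp [*]) hζ (by fun_prop) hζd,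
    logDeriv_mul (g := fun s => cos (π * s / 2)) _ (by simp [*]) hcos (by fun_prop) hcosd,
    logDeriv_mul _ (by simp [*]) hΓ (by fun_prop) hΓd,
    logDeriv_const_mul _ _ two_ne_zero, logDeriv_const_cpow_neg h2π, logDeriv_cos_pi_mul_div_two,
    ← digamma_def, ← ofReal_ofNat, ← ofReal_mul, ← ofReal_log (by positivity)]
  ring

end Complex

theorem stmt_14_general (z : ℂ) (hz : ∀ n : ℤ, z ≠ (n : ℂ))
    (h1 : riemannZeta z ≠ 0) :
    deriv Complex.Gamma (z + 1) / Complex.Gamma (z + 1) =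
      -(deriv riemannZeta (1 - z) / riemannZeta (1 - z)) -
        deriv riemannZeta z / riemannZeta z + 1 / z +
        (π / 2) * Complex.tan (π * z / 2) + Real.log (2 * π) := by
  have hzC : z ∈ integerComplement := fun ⟨n, hn⟩ => hz n hn.symm
  have hψ := digamma_apply_add_one z (integerComplement.ne_neg_natCast hzC)
  have hζ := logDeriv_riemannZeta_one_sub hzC h1
  simp only [digamma_def, logDeriv_apply] at hψ hζ
  rw [hψ, hζ]
  ring

theorem stmt_14 (z : ℂ) (hz : ∀ n : ℤ, z ≠ (n : ℂ))
    (h1 : riemannZeta z ≠ 0) (h2 : riemannZeta (1 - z) ≠ 0) :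
    deriv Complex.Gamma (z + 1) / Complex.Gamma (z + 1) =
      -(deriv riemannZeta (1 - z) / riemannZeta (1 - z)) -
        deriv riemannZeta z / riemannZeta z + 1 / z +
        (π / 2) * Complex.tan (π * z / 2) + Real.log (2 * π) :=
  stmt_14_general z hz h1
end
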